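/- In the Gaudin realization, the generating function of integrals of motion commutes with itself at different values of the spectral parameter: for all λ, μ ∈ ℂ ∖ {z₁,…,z_N} with λ ≠ μ, t(λ) t(μ) = t(μ) t(λ). -/

import Mathlib

/-- osp(1|2) Gaudin model data: sites, inhomogeneity parameters, and local
osp(1|2) operators with super-commutation relations across sites. -/
structure OspGaudinData (N : ℕ) (H : Type*) [AddCommGroup H] [Module ℂ H] where
  z : Fin N → ℂ
  z_inj : Function.Injective z
  h : Fin N → Module.End ℂ H
  Xp : Fin N → Module.End ℂ H
  Xm : Fin N → Module.End ℂ H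
  vp : Fin N → Module.End ℂ H
  vm : Fin N → Module.End ℂ H
  rel_hXp : ∀ a, h a * Xp a - Xp a * h a = (2:ℂ) • Xp a
  rel_hXm : ∀ a, h a * Xm a - Xm a * h a = (-2:ℂ) • Xm a
  rel_XpXm : ∀ a, Xp a * Xm a - Xm a * Xp a = h a
  rel_hvp : ∀ a, h a * vp a - vp a * h a = vp a
  rel_hvm : ∀ a, h a * vm a - vm a * h a = -vm a
  rel_vpvm : ∀ a, vp a * vm a + vm a * vp a = -h a
  rel_Xmvp : ∀ a, Xm a * vp a - vp a * Xm a = vm a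
  rel_Xpvm : ∀ a, Xp a * vm a - vm a * Xp a = vp a
  rel_vpvp : ∀ a, vp a * vp a = Xp a
  rel_vmvm : ∀ a, vm a * vm a = -Xm a
  rel_Xpvp : ∀ a, Xp a * vp a = vp a * Xp a
  rel_Xmvm : ∀ a, Xm a * vm a = vm a * Xm a
  even_comm : ∀ a b, a ≠ b → ∀ Y ∈ ({h a, Xp a, Xm a} : Set (Module.End ℂ H)),
      ∀ Z ∈ ({h b, Xp b, Xm b, vp b, vm b} : Set (Module.End ℂ H)), Y * Z = Z * Y
  odd_anticomm : ∀ a b, a ≠ b → ∀ Y ∈ ({vp a, vm a} : Set (Module.End ℂ H)),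
      ∀ Z ∈ ({vp b, vm b} : Set (Module.End ℂ H)), Y * Z + Z * Y = 0

namespace OspGaudinData

variable {N : ℕ} {H : Type*} [AddCommGroup H] [Module ℂ H]

/-- The Gaudin realization h(λ). -/
noncomputable def hl (G : OspGaudinData N H) (lam : ℂ) : Module.End ℂ H :=
  ∑ a, ((lam - G.z a)⁻¹) • G.h a

noncomputable def Xpl (G : OspGaudinData N H) (lam : ℂ) : Module.End ℂ H :=
  ∑ a, ((lam - G.z a)⁻¹) • G.Xp a

noncomputable def Xml (G : OspGaudinData N H) (lam : ℂ) : Module.End ℂ H :=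
  ∑ a, ((lam - G.z a)⁻¹) • G.Xm a

noncomputable def vpl (G : OspGaudinData N H) (lam : ℂ) : Module.End ℂ H :=
  ∑ a, ((lam - G.z a)⁻¹) • G.vp a

noncomputable def vml (G : OspGaudinData N H) (lam : ℂ) : Module.End ℂ H :=
  ∑ a, ((lam - G.z a)⁻¹) • G.vm a

/-- h′(λ) = −Σ_a h_a/(λ − z_a)². -/
noncomputable def hl' (G : OspGaudinData N H) (lam : ℂ) : Module.End ℂ H :=
  -∑ a, (((lam - G.z a)^2)⁻¹) • G.h a

/-- The generating function t(λ) of the integrals of motion. -/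
noncomputable def tOp (G : OspGaudinData N H) (lam : ℂ) : Module.End ℂ H :=
  G.hl lam * G.hl lam + G.hl' lam + (4:ℂ) • (G.Xpl lam * G.Xml lam)
    + (2:ℂ) • (G.vpl lam * G.vml lam)

/-- The Gaudin Hamiltonian at site `a`. -/
noncomputable def Gham (G : OspGaudinData N H) (a : Fin N) : Module.End ℂ H :=
  ∑ b ∈ Finset.univ.erase a, ((G.z a - G.z b)⁻¹) •
    (G.h a * G.h b + (2:ℂ) • (G.Xp a * G.Xm b + G.Xm a * G.Xp b)
      + (G.vp a * G.vm b - G.vm a * G.vp b))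

end OspGaudinData

/-!
Partial fractions turn `t(λ)` into `Σ_a C_a/(λ - z_a)² + 2 Σ_a H_a/(λ - z_a)`, where `C_a` is the
osp(1|2) Casimir at site `a` and `H_a = Σ_{b ≠ a} Ω_ab/(z_a - z_b)` is the Gaudin Hamiltonian
built from the split Casimir `Ω_ab`; so it suffices that all `C_a` and `H_a` commute.

The even generators of osp(1|2) are quadratic in the odd ones `v^±`, so an even operator commuting
with `v^±_s` commutes with everything at site `s`, and one commuting with `v^±_a + v^±_b`
commutes with the diagonal generators `Y_a + Y_b`. Hence two direct computations, of
`[C_a, v^±_a]` and of `[Ω_ab, v^±_a + v^±_b]`, show that `C_a` is central and that `Ω_ab`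
commutes with `Ω_ac + Ω_bc`. In `[H_a, H_b]` only pairs of split Casimirs sharing a site survive;
by this invariance the terms attached to a third site `c` are multiples of `[Ω_ab, Ω_ac]`, with
coefficients that cancel by a three-term partial-fraction identity.
-/

theorem commute_mul_of_anticommute {R : Type*} [Ring R] {a b c : R}
    (hb : a * b + b * a = 0) (hc : a * c + c * a = 0) : Commute a (b * c) := by
  have hb' : a * b = -(b * a) := eq_neg_of_add_eq_zero_left hb
  have hc' : a * c = -(c * a) := eq_neg_of_add_eq_zero_left hc
  calc a * (b * c) = -(b * (a * c)) := by rw [← mul_assoc, hb', neg_mul, mul_assoc]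
    _ = b * c * a := by rw [hc', mul_neg, neg_neg, mul_assoc]

theorem commute_even_of_commute_odd {R : Type*} [Ring R] {P h Xp Xm vp vm : R}
    (hvpvp : vp * vp = Xp) (hvmvm : vm * vm = -Xm) (hvpvm : vp * vm + vm * vp = -h)
    (hp : Commute P vp) (hm : Commute P vm) :
    Commute P h ∧ Commute P Xp ∧ Commute P Xm := by
  refine ⟨?_, hvpvp ▸ hp.mul_right hp, ?_⟩
  · rw [← neg_neg h, ← hvpvm]
    exact ((hp.mul_right hm).add_right (hm.mul_right hp)).neg_right
  · rw [← neg_neg Xm, ← hvmvm]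
    exact (hm.mul_right hm).neg_right

section Sums

open Finset

variable {ι M : Type*} [Fintype ι] [DecidableEq ι]

theorem sum_sum_erase_comm [AddCommMonoid M] (F : ι → ι → M) :
    ∑ a, ∑ b ∈ univ.erase a, F a b = ∑ a, ∑ b ∈ univ.erase a, F b a :=
  sum_comm' fun a b => by simp only [mem_univ, mem_erase, true_and, and_true, ne_comm]

/-- Partial fractions: `1/((λ-zₐ)(λ-z_b)) = (1/(zₐ-z_b)) (1/(λ-zₐ) - 1/(λ-z_b))`. -/
theorem sum_sum_erase_inv_mul_inv_smul [AddCommGroup M] [Module ℂ M] {z : ι → ℂ}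
    (hz : Function.Injective z) {lam : ℂ} (hlam : ∀ a, lam ≠ z a) (F : ι → ι → M) :
    ∑ a, ∑ b ∈ univ.erase a, ((lam - z a)⁻¹ * (lam - z b)⁻¹) • F a b
      = ∑ a, (lam - z a)⁻¹ • ∑ b ∈ univ.erase a, (z a - z b)⁻¹ • (F a b + F b a) := by
  have split : ∀ a, ∀ b ∈ univ.erase a, ((lam - z a)⁻¹ * (lam - z b)⁻¹) • F a b
      = (lam - z a)⁻¹ • (z a - z b)⁻¹ • F a b + (lam - z b)⁻¹ • (z b - z a)⁻¹ • F a b := by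
    intro a b hb
    have hzab : z a - z b ≠ 0 := sub_ne_zero.mpr (hz.ne (ne_of_mem_erase hb).symm)
    have hzba : z b - z a ≠ 0 := sub_ne_zero.mpr (hz.ne (ne_of_mem_erase hb))
    have hla : lam - z a ≠ 0 := sub_ne_zero.mpr (hlam a)
    have hlb : lam - z b ≠ 0 := sub_ne_zero.mpr (hlam b)
    rw [smul_smul, smul_smul, ← add_smul]
    congr 1
    field_simp
    ring
  rw [sum_congr rfl fun a _ => sum_congr rfl (split a)]
  simp only [sum_add_distrib]
  rw [sum_sum_erase_comm (fun a b => (lam - z b)⁻¹ • (z b - z a)⁻¹ • F a b), ← sum_add_distrib]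
  simp only [smul_sum, ← sum_add_distrib, smul_add]

theorem sum_erase_sum_erase_eq_of_eq_zero [AddCommMonoid M] {a b : ι} (hab : a ≠ b) (F : ι → ι → M)
    (hF : ∀ c d, c ≠ a → c ≠ b → d ≠ a → d ≠ b → c ≠ d → F c d = 0) :
    ∑ c ∈ univ.erase a, ∑ d ∈ univ.erase b, F c d
      = F b a + ∑ e ∈ (univ.erase a).erase b, (F b e + F e a + F e e) := by
  have hbA : b ∈ univ.erase a := mem_erase.mpr ⟨hab.symm, mem_univ b⟩
  have haB : a ∈ univ.erase b := mem_erase.mpr ⟨hab, mem_univ a⟩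
  have row : ∀ e ∈ (univ.erase a).erase b, ∑ d ∈ univ.erase b, F e d = F e a + F e e := by
    intro e he
    obtain ⟨heb, hea⟩ : e ≠ b ∧ e ≠ a := by simpa using he
    have heB : e ∈ (univ.erase b).erase a := by simp [heb, hea]
    rw [← add_sum_erase _ _ haB, ← add_sum_erase _ _ heB, sum_eq_zero, add_zero]
    intro d hd
    obtain ⟨hde, hda, hdb⟩ : d ≠ e ∧ d ≠ a ∧ d ≠ b := by simpa using hd
    exact hF e d hea heb hda hdb hde.symm
  rw [← add_sum_erase _ _ hbA, sum_congr rfl row, ← add_sum_erase _ _ haB,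
    erase_right_comm (a := b), add_assoc, ← sum_add_distrib]
  simp only [add_assoc]

end Sums

namespace OspGaudinData

variable {N : ℕ} {H : Type*} [AddCommGroup H] [Module ℂ H] (G : OspGaudinData N H)

section CrossSite

variable {a b : Fin N}

theorem commute_h_h (hab : a ≠ b) : Commute (G.h a) (G.h b) :=
  G.even_comm a b hab _ (by simp) _ (by simp)

theorem commute_Xp_Xm (hab : a ≠ b) : Commute (G.Xp a) (G.Xm b) :=
  G.even_comm a b hab _ (by simp) _ (by simp)

theorem commute_h_vp (hab : a ≠ b) : Commute (G.h a) (G.vp b) :=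
  G.even_comm a b hab _ (by simp) _ (by simp)

theorem commute_h_vm (hab : a ≠ b) : Commute (G.h a) (G.vm b) :=
  G.even_comm a b hab _ (by simp) _ (by simp)

theorem commute_Xp_vp (hab : a ≠ b) : Commute (G.Xp a) (G.vp b) :=
  G.even_comm a b hab _ (by simp) _ (by simp)

theorem commute_Xp_vm (hab : a ≠ b) : Commute (G.Xp a) (G.vm b) :=
  G.even_comm a b hab _ (by simp) _ (by simp)

theorem commute_Xm_vp (hab : a ≠ b) : Commute (G.Xm a) (G.vp b) :=
  G.even_comm a b hab _ (by simp) _ (by simp)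

theorem commute_Xm_vm (hab : a ≠ b) : Commute (G.Xm a) (G.vm b) :=
  G.even_comm a b hab _ (by simp) _ (by simp)

theorem vp_anticomm_vp (hab : a ≠ b) : G.vp a * G.vp b + G.vp b * G.vp a = 0 :=
  G.odd_anticomm a b hab _ (by simp) _ (by simp)

theorem vp_anticomm_vm (hab : a ≠ b) : G.vp a * G.vm b + G.vm b * G.vp a = 0 :=
  G.odd_anticomm a b hab _ (by simp) _ (by simp)

theorem vm_anticomm_vp (hab : a ≠ b) : G.vm a * G.vp b + G.vp b * G.vm a = 0 :=
  G.odd_anticomm a b hab _ (by simp) _ (by simp)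

theorem vm_anticomm_vm (hab : a ≠ b) : G.vm a * G.vm b + G.vm b * G.vm a = 0 :=
  G.odd_anticomm a b hab _ (by simp) _ (by simp)

end CrossSite

theorem commute_site_of_commute_odd {P : Module.End ℂ H} {s : Fin N}
    (hp : Commute P (G.vp s)) (hm : Commute P (G.vm s)) :
    Commute P (G.h s) ∧ Commute P (G.Xp s) ∧ Commute P (G.Xm s) :=
  commute_even_of_commute_odd (G.rel_vpvp s) (G.rel_vmvm s) (G.rel_vpvm s) hp hm

noncomputable def casimir (a : Fin N) : Module.End ℂ H :=
  G.h a * G.h a - G.h a + (4:ℂ) • (G.Xp a * G.Xm a) + (2:ℂ) • (G.vp a * G.vm a)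

noncomputable def splitCasimir (a b : Fin N) : Module.End ℂ H :=
  G.h a * G.h b + (2:ℂ) • (G.Xp a * G.Xm b + G.Xm a * G.Xp b)
    + (G.vp a * G.vm b - G.vm a * G.vp b)

theorem gham_eq_sum_splitCasimir (a : Fin N) :
    G.Gham a = ∑ b ∈ Finset.univ.erase a, (G.z a - G.z b)⁻¹ • G.splitCasimir a b :=
  rfl

noncomputable def gaudinAlgebra : Subalgebra ℂ (Module.End ℂ H) :=
  Algebra.adjoin ℂ (Set.range G.casimir ∪ Set.range G.Gham)

variable {G}

open Finset

theorem commute_casimir {Q : Module.End ℂ H} {a : Fin N} (hh : Commute Q (G.h a))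
    (hXp : Commute Q (G.Xp a)) (hXm : Commute Q (G.Xm a)) (hv : Commute Q (G.vp a * G.vm a)) :
    Commute Q (G.casimir a) :=
  (((hh.mul_right hh).sub_right hh).add_right ((hXp.mul_right hXm).smul_right _)).add_right
    (hv.smul_right _)

theorem commute_splitCasimir {Q : Module.End ℂ H} {x y : Fin N}
    (hhx : Commute Q (G.h x)) (hhy : Commute Q (G.h y))
    (hXpx : Commute Q (G.Xp x)) (hXmy : Commute Q (G.Xm y))
    (hXmx : Commute Q (G.Xm x)) (hXpy : Commute Q (G.Xp y))
    (hv : Commute Q (G.vp x * G.vm y)) (hv' : Commute Q (G.vm x * G.vp y)) :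
    Commute Q (G.splitCasimir x y) :=
  ((hhx.mul_right hhy).add_right
    (((hXpx.mul_right hXmy).add_right (hXmx.mul_right hXpy)).smul_right _)).add_right
      (hv.sub_right hv')

theorem commute_casimir_of_commute_odd {P : Module.End ℂ H} {a : Fin N}
    (hp : Commute P (G.vp a)) (hm : Commute P (G.vm a)) : Commute P (G.casimir a) :=
  have ⟨hh, hXp, hXm⟩ := G.commute_site_of_commute_odd hp hm
  commute_casimir hh hXp hXm (hp.mul_right hm)

theorem commute_splitCasimir_of_commute_odd {P : Module.End ℂ H} {x y : Fin N}
    (hpx : Commute P (G.vp x)) (hmx : Commute P (G.vm x))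
    (hpy : Commute P (G.vp y)) (hmy : Commute P (G.vm y)) : Commute P (G.splitCasimir x y) :=
  have ⟨hhx, hXpx, hXmx⟩ := G.commute_site_of_commute_odd hpx hmx
  have ⟨hhy, hXpy, hXmy⟩ := G.commute_site_of_commute_odd hpy hmy
  commute_splitCasimir hhx hhy hXpx hXmy hXmx hXpy (hpx.mul_right hmy) (hmx.mul_right hpy)

theorem casimir_commute_vp_self (a : Fin N) : Commute (G.casimir a) (G.vp a) := by
  simp only [Commute, SemiconjBy, casimir, ofNat_smul_eq_nsmul (R := ℂ)]
  linear_combination (norm := noncomm_ring)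
    G.h a * G.rel_hvp a + G.rel_hvp a * G.h a + 4 * G.Xp a * G.rel_Xmvp a
      + 4 * G.rel_Xpvp a * G.Xm a + 2 * G.vp a * G.rel_vpvm a - 4 * G.rel_vpvp a * G.vm a

theorem casimir_commute_vm_self (a : Fin N) : Commute (G.casimir a) (G.vm a) := by
  simp only [Commute, SemiconjBy, casimir, ofNat_smul_eq_nsmul (R := ℂ)]
  linear_combination (norm := noncomm_ring)
    G.h a * G.rel_hvm a + G.rel_hvm a * G.h a + 4 * G.Xp a * G.rel_Xmvm a
      + 4 * G.rel_Xpvm a * G.Xm a + 4 * G.vp a * G.rel_vmvm a - 2 * G.rel_vpvm a * G.vm a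

theorem vp_commute_casimir {a b : Fin N} (hab : a ≠ b) : Commute (G.vp b) (G.casimir a) :=
  commute_casimir (G.commute_h_vp hab).symm (G.commute_Xp_vp hab).symm (G.commute_Xm_vp hab).symm
    (commute_mul_of_anticommute (G.vp_anticomm_vp hab.symm) (G.vp_anticomm_vm hab.symm))

theorem vm_commute_casimir {a b : Fin N} (hab : a ≠ b) : Commute (G.vm b) (G.casimir a) :=
  commute_casimir (G.commute_h_vm hab).symm (G.commute_Xp_vm hab).symm (G.commute_Xm_vm hab).symm
    (commute_mul_of_anticommute (G.vm_anticomm_vp hab.symm) (G.vm_anticomm_vm hab.symm))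

theorem casimir_commute_vp (a s : Fin N) : Commute (G.casimir a) (G.vp s) := by
  rcases eq_or_ne a s with rfl | has
  · exact casimir_commute_vp_self a
  · exact (vp_commute_casimir has).symm

theorem casimir_commute_vm (a s : Fin N) : Commute (G.casimir a) (G.vm s) := by
  rcases eq_or_ne a s with rfl | has
  · exact casimir_commute_vm_self a
  · exact (vm_commute_casimir has).symm

theorem commute_casimir_casimir (a b : Fin N) : Commute (G.casimir a) (G.casimir b) :=
  commute_casimir_of_commute_odd (casimir_commute_vp a b) (casimir_commute_vm a b)

theorem commute_casimir_gham (a b : Fin N) : Commute (G.casimir a) (G.Gham b) := by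
  rw [gham_eq_sum_splitCasimir]
  exact Commute.sum_right _ _ _ fun c _ => (commute_splitCasimir_of_commute_odd
    (casimir_commute_vp a b) (casimir_commute_vm a b)
    (casimir_commute_vp a c) (casimir_commute_vm a c)).smul_right _

theorem vp_commute_splitCasimir {x y e : Fin N} (hxe : x ≠ e) (hye : y ≠ e) :
    Commute (G.vp e) (G.splitCasimir x y) :=
  commute_splitCasimir (G.commute_h_vp hxe).symm (G.commute_h_vp hye).symm
    (G.commute_Xp_vp hxe).symm (G.commute_Xm_vp hye).symm
    (G.commute_Xm_vp hxe).symm (G.commute_Xp_vp hye).symm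
    (commute_mul_of_anticommute (G.vp_anticomm_vp hxe.symm) (G.vp_anticomm_vm hye.symm))
    (commute_mul_of_anticommute (G.vp_anticomm_vm hxe.symm) (G.vp_anticomm_vp hye.symm))

theorem vm_commute_splitCasimir {x y e : Fin N} (hxe : x ≠ e) (hye : y ≠ e) :
    Commute (G.vm e) (G.splitCasimir x y) :=
  commute_splitCasimir (G.commute_h_vm hxe).symm (G.commute_h_vm hye).symm
    (G.commute_Xp_vm hxe).symm (G.commute_Xm_vm hye).symm
    (G.commute_Xm_vm hxe).symm (G.commute_Xp_vm hye).symm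
    (commute_mul_of_anticommute (G.vm_anticomm_vp hxe.symm) (G.vm_anticomm_vm hye.symm))
    (commute_mul_of_anticommute (G.vm_anticomm_vm hxe.symm) (G.vm_anticomm_vp hye.symm))

theorem commute_splitCasimir_splitCasimir {a c b d : Fin N} (hab : a ≠ b) (had : a ≠ d)
    (hcb : c ≠ b) (hcd : c ≠ d) : Commute (G.splitCasimir a c) (G.splitCasimir b d) :=
  commute_splitCasimir_of_commute_odd
    (vp_commute_splitCasimir hab hcb).symm (vm_commute_splitCasimir hab hcb).symm
    (vp_commute_splitCasimir had hcd).symm (vm_commute_splitCasimir had hcd).symm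

theorem splitCasimir_comm {x y : Fin N} (hxy : x ≠ y) :
    G.splitCasimir x y = G.splitCasimir y x := by
  simp only [splitCasimir, ofNat_smul_eq_nsmul (R := ℂ)]
  linear_combination (norm := noncomm_ring)
    (G.commute_h_h hxy).eq + 2 * (G.commute_Xp_Xm hxy).eq - 2 * (G.commute_Xp_Xm hxy.symm).eq
      + G.vp_anticomm_vm hxy - G.vm_anticomm_vp hxy

theorem splitCasimir_commute_vp_add {x y : Fin N} (hxy : x ≠ y) :
    Commute (G.splitCasimir x y) (G.vp x + G.vp y) := by
  have hyx := hxy.symm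
  simp only [Commute, SemiconjBy, splitCasimir, ofNat_smul_eq_nsmul (R := ℂ)]
  linear_combination (norm := noncomm_ring)
    G.h x * (G.commute_h_vp hyx).eq + G.h x * G.rel_hvp y + 2 * G.Xp x * (G.commute_Xm_vp hyx).eq
      + 2 * G.Xp x * G.rel_Xmvp y + 2 * G.Xm x * (G.commute_Xp_vp hyx).eq
      + 2 * G.Xm x * G.rel_Xpvp y + G.vp x * G.vm_anticomm_vp hyx + G.vp x * G.rel_vpvm y
      - G.vm x * G.vp_anticomm_vp hyx - 2 * G.vm x * G.rel_vpvp y - 2 * G.rel_vpvp x * G.vm y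
      + (G.commute_h_vp hxy).eq * G.h y + 2 * (G.commute_Xp_vp hxy).eq * G.Xm y
      + 2 * (G.commute_Xm_vp hxy).eq * G.Xp y - G.vp_anticomm_vp hyx * G.vm y
      + G.vp_anticomm_vm hyx * G.vp y + G.rel_hvp x * G.h y + 2 * G.rel_Xpvp x * G.Xm y
      + 2 * G.rel_Xmvp x * G.Xp y + G.rel_vpvm x * G.vp y

theorem splitCasimir_commute_vm_add {x y : Fin N} (hxy : x ≠ y) :
    Commute (G.splitCasimir x y) (G.vm x + G.vm y) := by
  have hyx := hxy.symm
  simp only [Commute, SemiconjBy, splitCasimir, ofNat_smul_eq_nsmul (R := ℂ)]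
  linear_combination (norm := noncomm_ring)
    G.h x * (G.commute_h_vm hyx).eq + G.h x * G.rel_hvm y + 2 * G.Xp x * (G.commute_Xm_vm hyx).eq
      + 2 * G.Xp x * G.rel_Xmvm y + 2 * G.Xm x * (G.commute_Xp_vm hyx).eq
      + 2 * G.Xm x * G.rel_Xpvm y + G.vp x * G.vm_anticomm_vm hyx + 2 * G.vp x * G.rel_vmvm y
      - G.vm x * G.vp_anticomm_vm hyx - G.vm x * G.rel_vpvm y - G.rel_vpvm x * G.vm y
      + 2 * G.rel_vmvm x * G.vp y + (G.commute_h_vm hxy).eq * G.h y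
      + 2 * (G.commute_Xp_vm hxy).eq * G.Xm y + 2 * (G.commute_Xm_vm hxy).eq * G.Xp y
      - G.vm_anticomm_vp hyx * G.vm y + G.vm_anticomm_vm hyx * G.vp y + G.rel_hvm x * G.h y
      + 2 * G.rel_Xpvm x * G.Xm y + 2 * G.rel_Xmvm x * G.Xp y

theorem splitCasimir_commute_diag {x y : Fin N} (hxy : x ≠ y) :
    Commute (G.splitCasimir x y) (G.h x + G.h y)
      ∧ Commute (G.splitCasimir x y) (G.Xp x + G.Xp y)
      ∧ Commute (G.splitCasimir x y) (G.Xm x + G.Xm y) := by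
  have hvpvp : (G.vp x + G.vp y) * (G.vp x + G.vp y) = G.Xp x + G.Xp y := by
    linear_combination (norm := noncomm_ring) G.rel_vpvp x + G.rel_vpvp y + G.vp_anticomm_vp hxy
  have hvmvm : (G.vm x + G.vm y) * (G.vm x + G.vm y) = -(G.Xm x + G.Xm y) := by
    linear_combination (norm := noncomm_ring) G.rel_vmvm x + G.rel_vmvm y + G.vm_anticomm_vm hxy
  have hvpvm : (G.vp x + G.vp y) * (G.vm x + G.vm y) + (G.vm x + G.vm y) * (G.vp x + G.vp y)
      = -(G.h x + G.h y) := by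
    linear_combination (norm := noncomm_ring)
      G.rel_vpvm x + G.rel_vpvm y + G.vp_anticomm_vm hxy + G.vm_anticomm_vp hxy
  exact commute_even_of_commute_odd hvpvp hvmvm hvpvm
    (splitCasimir_commute_vp_add hxy) (splitCasimir_commute_vm_add hxy)

theorem splitCasimir_commute_add {x y e : Fin N} (hxy : x ≠ y) (hxe : x ≠ e) (hye : y ≠ e) :
    Commute (G.splitCasimir x y) (G.splitCasimir x e + G.splitCasimir y e) := by
  have hp := splitCasimir_commute_vp_add (G := G) hxy
  have hm := splitCasimir_commute_vm_add (G := G) hxy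
  obtain ⟨hh, hXp, hXm⟩ := splitCasimir_commute_diag (G := G) hxy
  have hpe := (vp_commute_splitCasimir (G := G) hxe hye).symm
  have hme := (vm_commute_splitCasimir (G := G) hxe hye).symm
  obtain ⟨hhe, hXpe, hXme⟩ := G.commute_site_of_commute_odd hpe hme
  have hsum : G.splitCasimir x e + G.splitCasimir y e = (G.h x + G.h y) * G.h e
      + (2:ℂ) • ((G.Xp x + G.Xp y) * G.Xm e + (G.Xm x + G.Xm y) * G.Xp e)
      + ((G.vp x + G.vp y) * G.vm e - (G.vm x + G.vm y) * G.vp e) := by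
    simp only [splitCasimir, ofNat_smul_eq_nsmul (R := ℂ)]
    noncomm_ring
  rw [hsum]
  exact ((hh.mul_right hhe).add_right
    (((hXp.mul_right hXme).add_right (hXm.mul_right hXpe)).smul_right _)).add_right
      ((hp.mul_right hme).sub_right (hm.mul_right hpe))

theorem splitCasimir_cyclic_sum {a b e : Fin N} (hab : a ≠ b) (hae : a ≠ e) (hbe : b ≠ e) :
    ((G.z a - G.z b)⁻¹ * (G.z b - G.z e)⁻¹) •
        (G.splitCasimir a b * G.splitCasimir b e - G.splitCasimir b e * G.splitCasimir a b)
      + ((G.z a - G.z e)⁻¹ * (G.z b - G.z a)⁻¹) •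
        (G.splitCasimir a e * G.splitCasimir b a - G.splitCasimir b a * G.splitCasimir a e)
      + ((G.z a - G.z e)⁻¹ * (G.z b - G.z e)⁻¹) •
        (G.splitCasimir a e * G.splitCasimir b e - G.splitCasimir b e * G.splitCasimir a e)
      = 0 := by
  have K1 := (splitCasimir_commute_add (G := G) hab hae hbe).eq
  have K2 := (splitCasimir_commute_add (G := G) hae hab hbe.symm).eq
  rw [← splitCasimir_comm hbe] at K2
  rw [← splitCasimir_comm hab]
  have e1 : G.splitCasimir a b * G.splitCasimir b e - G.splitCasimir b e * G.splitCasimir a b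
      = -(G.splitCasimir a b * G.splitCasimir a e - G.splitCasimir a e * G.splitCasimir a b) := by
    linear_combination (norm := noncomm_ring) K1
  have e2 : G.splitCasimir a e * G.splitCasimir b e - G.splitCasimir b e * G.splitCasimir a e
      = G.splitCasimir a b * G.splitCasimir a e - G.splitCasimir a e * G.splitCasimir a b := by
    linear_combination (norm := noncomm_ring) K2
  rw [e1, e2]
  have hzab : G.z a - G.z b ≠ 0 := sub_ne_zero.mpr (G.z_inj.ne hab)
  have hzba : G.z b - G.z a ≠ 0 := sub_ne_zero.mpr (G.z_inj.ne hab.symm)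
  have hzae : G.z a - G.z e ≠ 0 := sub_ne_zero.mpr (G.z_inj.ne hae)
  have hzbe : G.z b - G.z e ≠ 0 := sub_ne_zero.mpr (G.z_inj.ne hbe)
  match_scalars
  · field_simp
    ring
  · field_simp
    ring

theorem commute_gham_gham (a b : Fin N) : Commute (G.Gham a) (G.Gham b) := by
  rcases eq_or_ne a b with rfl | hab
  · exact Commute.refl _
  set F : Fin N → Fin N → Module.End ℂ H := fun c d =>
    ((G.z a - G.z c)⁻¹ * (G.z b - G.z d)⁻¹) •
      (G.splitCasimir a c * G.splitCasimir b d - G.splitCasimir b d * G.splitCasimir a c) with hF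
  have expand : G.Gham a * G.Gham b - G.Gham b * G.Gham a
      = ∑ c ∈ univ.erase a, ∑ d ∈ univ.erase b, F c d := by
    simp only [gham_eq_sum_splitCasimir, sum_mul_sum, hF, smul_sub, smul_mul_smul_comm]
    rw [sum_comm (s := univ.erase b), ← sum_sub_distrib]
    refine sum_congr rfl fun c _ => ?_
    rw [← sum_sub_distrib]
    simp only [mul_comm]
  have disjoint : ∀ c d, c ≠ a → c ≠ b → d ≠ a → d ≠ b → c ≠ d → F c d = 0 := by
    intro c d hca hcb hda hdb hcd
    simp only [hF]
    rw [(commute_splitCasimir_splitCasimir hab hda.symm hcb hcd).eq, sub_self, smul_zero]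
  have hFba : F b a = 0 := by simp only [hF, splitCasimir_comm hab, sub_self, smul_zero]
  rw [commute_iff_eq, ← sub_eq_zero, expand, sum_erase_sum_erase_eq_of_eq_zero hab F disjoint,
    hFba, zero_add]
  refine sum_eq_zero fun e he => ?_
  obtain ⟨heb, hea⟩ : e ≠ b ∧ e ≠ a := by simpa using he
  exact splitCasimir_cyclic_sum hab hea.symm heb.symm

theorem tOp_eq_sum_sum (lam : ℂ) :
    G.tOp lam = ∑ a, ∑ b, ((lam - G.z a)⁻¹ * (lam - G.z b)⁻¹) •
        (G.h a * G.h b + (4:ℂ) • (G.Xp a * G.Xm b) + (2:ℂ) • (G.vp a * G.vm b))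
      - ∑ a, ((lam - G.z a)⁻¹ * (lam - G.z a)⁻¹) • G.h a := by
  simp only [tOp, hl, Xpl, Xml, vpl, vml, hl', sum_mul_sum, smul_mul_smul_comm, smul_sum,
    smul_add, sum_add_distrib, sq, mul_inv, smul_comm (4:ℂ), smul_comm (2:ℂ)]
  abel

theorem tOp_eq {lam : ℂ} (hlam : ∀ a, lam ≠ G.z a) :
    G.tOp lam = ∑ a, ((lam - G.z a)⁻¹ * (lam - G.z a)⁻¹) • G.casimir a
      + ∑ a, (lam - G.z a)⁻¹ • (2:ℂ) • G.Gham a := by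
  rw [tOp_eq_sum_sum]
  set K : Fin N → Fin N → Module.End ℂ H := fun a b =>
    G.h a * G.h b + (4:ℂ) • (G.Xp a * G.Xm b) + (2:ℂ) • (G.vp a * G.vm b) with hK
  have hdiag : ∀ a, K a a - G.h a = G.casimir a := by
    intro a
    simp only [hK, casimir]
    abel
  have hoff : ∀ a,
      ∑ b ∈ univ.erase a, (G.z a - G.z b)⁻¹ • (K a b + K b a) = (2:ℂ) • G.Gham a := by
    intro a
    rw [gham_eq_sum_splitCasimir, smul_sum]
    refine sum_congr rfl fun b hb => ?_
    have hba := ne_of_mem_erase hb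
    rw [smul_comm]
    congr 1
    simp only [hK, splitCasimir, ofNat_smul_eq_nsmul (R := ℂ)]
    linear_combination (norm := noncomm_ring)
      (G.commute_h_h hba).eq + 4 * (G.commute_Xp_Xm hba).eq + 2 * G.vp_anticomm_vm hba
  have hsplit : ∑ a, ∑ b, ((lam - G.z a)⁻¹ * (lam - G.z b)⁻¹) • K a b
      = ∑ a, ((lam - G.z a)⁻¹ * (lam - G.z a)⁻¹) • K a a
        + ∑ a, ∑ b ∈ univ.erase a, ((lam - G.z a)⁻¹ * (lam - G.z b)⁻¹) • K a b := by
    rw [← sum_add_distrib]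
    exact sum_congr rfl fun a _ => (add_sum_erase _ _ (mem_univ a)).symm
  rw [hsplit, sum_sum_erase_inv_mul_inv_smul G.z_inj hlam K, add_sub_right_comm,
    ← sum_sub_distrib]
  simp only [← smul_sub, hdiag, hoff]

theorem commute_of_mem_gaudinAlgebra {P Q : Module.End ℂ H} (hP : P ∈ G.gaudinAlgebra)
    (hQ : Q ∈ G.gaudinAlgebra) : Commute P Q := by
  have gens : ∀ A ∈ Set.range G.casimir ∪ Set.range G.Gham,
      ∀ B ∈ Set.range G.casimir ∪ Set.range G.Gham, Commute A B := by
    rintro _ (⟨a, rfl⟩ | ⟨a, rfl⟩) _ (⟨b, rfl⟩ | ⟨b, rfl⟩)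
    · exact commute_casimir_casimir a b
    · exact commute_casimir_gham a b
    · exact (commute_casimir_gham b a).symm
    · exact commute_gham_gham a b
  refine Algebra.commute_of_mem_adjoin_of_forall_mem_commute hQ fun B hB => ?_
  exact (Algebra.commute_of_mem_adjoin_of_forall_mem_commute hP fun A hA => gens B hB A hA).symm

theorem tOp_mem_gaudinAlgebra {lam : ℂ} (hlam : ∀ a, lam ≠ G.z a) :
    G.tOp lam ∈ G.gaudinAlgebra := by
  have hC a : G.casimir a ∈ G.gaudinAlgebra := Algebra.subset_adjoin (.inl (Set.mem_range_self a))
  have hH a : G.Gham a ∈ G.gaudinAlgebra := Algebra.subset_adjoin (.inr (Set.mem_range_self a))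
  rw [tOp_eq hlam]
  exact add_mem (sum_mem fun a _ => G.gaudinAlgebra.smul_mem (hC a) _)
    (sum_mem fun a _ => G.gaudinAlgebra.smul_mem (G.gaudinAlgebra.smul_mem (hH a) _) _)

end OspGaudinData

theorem tOp_commute_general {N : ℕ} {H : Type*} [AddCommGroup H] [Module ℂ H]
    (G : OspGaudinData N H) (lam mu : ℂ)
    (hlam : ∀ a, lam ≠ G.z a) (hmu : ∀ a, mu ≠ G.z a) :
    G.tOp lam * G.tOp mu = G.tOp mu * G.tOp lam :=
  OspGaudinData.commute_of_mem_gaudinAlgebra (OspGaudinData.tOp_mem_gaudinAlgebra hlam)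
    (OspGaudinData.tOp_mem_gaudinAlgebra hmu)

/-- the generating function of integrals of motion commutes with
itself at different values of the spectral parameter. -/
theorem tOp_commute {N : ℕ} {H : Type*} [AddCommGroup H] [Module ℂ H]
    (hN : 1 ≤ N) (G : OspGaudinData N H) (lam mu : ℂ)
    (hlam : ∀ a, lam ≠ G.z a) (hmu : ∀ a, mu ≠ G.z a) (hne : lam ≠ mu) :
    G.tOp lam * G.tOp mu = G.tOp mu * G.tOp lam :=
  tOp_commute_general G lam mu hlam hmu
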